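/- arXiv:1309.6116 — 4 statements merged into one kernel-verified Lean document; each statement's English description precedes it below -/
import Mathlib

section
/- Let Γ be a real matrix with rows indexed by a set X and columns by a set Y, and for x ∈ X, y ∈ Y ⊆ [q]^n strings, let Δ_J denote the 0/1 matrix with Δ_J[x,y] = 1 iff x_j ≠ y_j for some j ∈ J. Then for any J ⊆ K ⊆ [n], ‖Γ ∘ Δ_J‖ ≤ 2‖Γ ∘ Δ_K‖, where ∘ is the entrywise (Hadamard) product and ‖·‖ is the operator norm. -/
/-- The ℓ₂→ℓ₂ operator norm of a real matrix. -/
noncomputable def opNorm {X Y : Type*} [Fintype X] [Fintype Y] [DecidableEq Y]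
    (A : Matrix X Y ℝ) : ℝ :=
  ‖LinearMap.toContinuousLinearMap (Matrix.toEuclideanLin A)‖

/-- The 0/1 matrix with entry 1 iff the strings differ on some coordinate in `J`. -/
noncomputable def deltaMat {q n : ℕ} (X Y : Finset (Fin n → Fin q)) (J : Finset (Fin n)) :
    Matrix X Y ℝ :=
  Matrix.of fun x y => if ∃ j ∈ J, (x : Fin n → Fin q) j ≠ (y : Fin n → Fin q) j then 1 else 0

/-!
With `A = Γ ∘ Δ_K` and `E[x,y] = [x_J = y_J]`, the inclusion `J ⊆ K` gives `Γ ∘ Δ_J = A - A ∘ E`.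
After permuting rows and columns, `A ∘ E` is the block-diagonal part of `A`, with blocks indexed
by the common restriction to `J`, so `‖A ∘ E‖ ≤ ‖A‖`; the triangle inequality gives `2‖A‖`.
-/

open scoped Matrix

def eqPattern {X Y Z : Type*} [DecidableEq Z] (φ : X → Z) (ψ : Y → Z) : Matrix X Y ℝ :=
  Matrix.of fun x y => if φ x = ψ y then 1 else 0

section OpNorm

variable {X Y : Type*} [Fintype X] [Fintype Y] [DecidableEq Y]

lemma norm_toEuclideanLin_apply_le (A : Matrix X Y ℝ) (v : EuclideanSpace ℝ Y) :
    ‖Matrix.toEuclideanLin A v‖ ≤ opNorm A * ‖v‖ :=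
  (LinearMap.toContinuousLinearMap (Matrix.toEuclideanLin A)).le_opNorm v

lemma opNorm_le_of_forall {A : Matrix X Y ℝ} {C : ℝ} (hC : 0 ≤ C)
    (h : ∀ v : EuclideanSpace ℝ Y, ‖Matrix.toEuclideanLin A v‖ ≤ C * ‖v‖) : opNorm A ≤ C :=
  ContinuousLinearMap.opNorm_le_bound _ hC h

lemma opNorm_sub_le (A B : Matrix X Y ℝ) : opNorm (A - B) ≤ opNorm A + opNorm B := by
  simp only [opNorm, map_sub]
  exact norm_sub_le _ _

/-- Pinching: `A ⊙ eqPattern φ ψ` is the block diagonal part `∑ z, P_z A Q_z` of `A`, where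
`P_z`, `Q_z` are the coordinate projections onto the fibres of `φ`, `ψ` over `z`. -/
lemma opNorm_hadamard_eqPattern_le {Z : Type*} [Fintype Z] [DecidableEq Z]
    (A : Matrix X Y ℝ) (φ : X → Z) (ψ : Y → Z) : opNorm (A ⊙ eqPattern φ ψ) ≤ opNorm A := by
  have hA : 0 ≤ opNorm A := norm_nonneg _
  refine opNorm_le_of_forall hA fun v => ?_
  let w : Z → EuclideanSpace ℝ Y := fun z => WithLp.toLp 2 fun y => if ψ y = z then v y else 0
  have hrow : ∀ x, Matrix.toEuclideanLin (A ⊙ eqPattern φ ψ) v x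
      = Matrix.toEuclideanLin A (w (φ x)) x := by
    intro x
    simp [w, eqPattern, Matrix.mulVec, dotProduct, eq_comm]
  have hw : ∑ z, ‖w z‖ ^ 2 = ‖v‖ ^ 2 := by
    simp only [EuclideanSpace.norm_sq_eq, w]
    rw [Finset.sum_comm]
    refine Finset.sum_congr rfl fun y _ => ?_
    simp
  rw [← pow_le_pow_iff_left₀ (norm_nonneg _) (by positivity) two_ne_zero]
  calc ‖Matrix.toEuclideanLin (A ⊙ eqPattern φ ψ) v‖ ^ 2
      = ∑ x, ‖Matrix.toEuclideanLin A (w (φ x)) x‖ ^ 2 := by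
        simp only [EuclideanSpace.norm_sq_eq, hrow]
    _ ≤ ∑ x, ∑ z, ‖Matrix.toEuclideanLin A (w z) x‖ ^ 2 :=
        Finset.sum_le_sum fun x _ =>
          Finset.single_le_sum (f := fun z => ‖Matrix.toEuclideanLin A (w z) x‖ ^ 2)
            (fun _ _ => by positivity) (Finset.mem_univ _)
    _ = ∑ z, ‖Matrix.toEuclideanLin A (w z)‖ ^ 2 := by
        rw [Finset.sum_comm]; simp only [EuclideanSpace.norm_sq_eq]
    _ ≤ ∑ z, (opNorm A * ‖w z‖) ^ 2 :=
        Finset.sum_le_sum fun z _ => by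
          gcongr; exact norm_toEuclideanLin_apply_le A (w z)
    _ = (opNorm A * ‖v‖) ^ 2 := by
        simp only [mul_pow, ← Finset.mul_sum, hw]

end OpNorm

lemma hadamard_deltaMat_eq_sub {q n : ℕ} (X Y : Finset (Fin n → Fin q)) (Γ : Matrix X Y ℝ)
    {J K : Finset (Fin n)} (hJK : J ⊆ K) :
    Γ ⊙ deltaMat X Y J = Γ ⊙ deltaMat X Y K
      - (Γ ⊙ deltaMat X Y K) ⊙ eqPattern (fun x : X => J.restrict (x : Fin n → Fin q))
          (fun y : Y => J.restrict (y : Fin n → Fin q)) := by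
  ext x y
  by_cases hJ : ∃ j ∈ J, (x : Fin n → Fin q) j ≠ (y : Fin n → Fin q) j
  · have hK : ∃ j ∈ K, (x : Fin n → Fin q) j ≠ (y : Fin n → Fin q) j :=
      hJ.imp fun _ ⟨hj, hne⟩ => ⟨hJK hj, hne⟩
    have hres : J.restrict (x : Fin n → Fin q) ≠ J.restrict (y : Fin n → Fin q) := fun h =>
      hJ.elim fun j ⟨hj, hne⟩ => hne (congrFun h ⟨j, hj⟩)
    simp [deltaMat, eqPattern, hres, hK, hJ]
  · have hres : J.restrict (x : Fin n → Fin q) = J.restrict (y : Fin n → Fin q) :=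
      funext fun j => not_not.mp fun hne => hJ ⟨j, j.2, hne⟩
    simp [deltaMat, eqPattern, hres, hJ]

theorem stmt_0 {q n : ℕ} (X Y : Finset (Fin n → Fin q)) (Γ : Matrix X Y ℝ)
    (J K : Finset (Fin n)) (hJK : J ⊆ K) :
    opNorm (Matrix.hadamard Γ (deltaMat X Y J)) ≤ 2 * opNorm (Matrix.hadamard Γ (deltaMat X Y K)) := by
  set A := Γ ⊙ deltaMat X Y K
  have hpinch := opNorm_hadamard_eqPattern_le A (fun x : X => J.restrict (x : Fin n → Fin q))
    (fun y : Y => J.restrict (y : Fin n → Fin q))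
  calc opNorm (Γ ⊙ deltaMat X Y J) ≤ opNorm A + opNorm (A ⊙ _) := by
        rw [hadamard_deltaMat_eq_sub X Y Γ hJK]; exact opNorm_sub_le _ _
    _ ≤ 2 * opNorm A := by linarith
end

section
/- For every total Boolean function f : {0,1}^n → {0,1}, the block sensitivity and certificate complexity satisfy bs(f) ≤ C(f) ≤ bs(f)² (Nisan's inequality). -/
/-- `x` with the bits in `B` flipped. -/
def flipOn {n : ℕ} (x : Fin n → Bool) (B : Finset (Fin n)) : Fin n → Bool :=
  fun i => if i ∈ B then !(x i) else x i

/-- Block sensitivity of `f` at `x`: the largest `k` admitting `k` pairwise disjoint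
nonempty sensitive blocks. -/
noncomputable def bsAt {n : ℕ} (f : (Fin n → Bool) → Bool) (x : Fin n → Bool) : ℕ :=
  sSup {k | ∃ B : Fin k → Finset (Fin n), (∀ i, (B i).Nonempty) ∧
    (∀ i j, i ≠ j → Disjoint (B i) (B j)) ∧ ∀ i, f (flipOn x (B i)) ≠ f x}

/-- Block sensitivity of `f`. -/
noncomputable def blockSensitivity {n : ℕ} (f : (Fin n → Bool) → Bool) : ℕ :=
  ⨆ x, bsAt f x

/-- Certificate complexity of `f` at `x`: the least size of a set `S` such that every
input agreeing with `x` on `S` has the same `f`-value. -/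
noncomputable def certAt {n : ℕ} (f : (Fin n → Bool) → Bool) (x : Fin n → Bool) : ℕ :=
  sInf {s | ∃ S : Finset (Fin n), S.card = s ∧ ∀ y, (∀ i ∈ S, y i = x i) → f y = f x}

/-- Certificate complexity of `f`. -/
noncomputable def certComplexity {n : ℕ} (f : (Fin n → Bool) → Bool) : ℕ :=
  ⨆ x, certAt f x

/-!
If `B₁, …, B_k` is a sensitive block family of maximum size `k = bs(f, x)`, the union of the
blocks is a certificate at `x`: an input `y` agreeing with `x` there but with `f y ≠ f x` would
supply one more sensitive block, namely the set where `y` and `x` differ. Shrinking every block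
to a minimal sensitive one keeps the family, and a minimal sensitive block `B` has
`|B| ≤ bs(f, x^B) ≤ bs(f)`, because at `x^B` every single bit of `B` is sensitive. Hence
`C(f, x) ≤ bs(f, x) · bs(f) ≤ bs(f)²`. Conversely any certificate meets every sensitive block,
and the blocks are disjoint, so `bs(f, x) ≤ C(f, x)`.
-/

open Finset

variable {n : ℕ}

lemma card_le_card_of_forall_inter_nonempty {ι α : Type*} [Fintype ι] [DecidableEq α]
    {B : ι → Finset α} (hdisj : ∀ i j, i ≠ j → Disjoint (B i) (B j)) {S : Finset α}
    (hS : ∀ i, (B i ∩ S).Nonempty) : Fintype.card ι ≤ S.card := by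
  choose g hg using hS
  have hgB : ∀ i, g i ∈ B i := fun i => (mem_inter.mp (hg i)).1
  have hinj : Function.Injective g := fun i j hij => by
    by_contra hne
    exact disjoint_left.mp (hdisj i j hne) (hgB i) (hij ▸ hgB j)
  rw [← card_univ]
  exact card_le_card_of_injOn g (fun i _ => (mem_inter.mp (hg i)).2) hinj.injOn

section flipOn

@[simp]
lemma flipOn_empty (x : Fin n → Bool) : flipOn x ∅ = x := by
  funext i
  simp [flipOn]

lemma flipOn_apply_of_notMem (x : Fin n → Bool) {B : Finset (Fin n)} {i : Fin n} (hi : i ∉ B) :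
    flipOn x B i = x i := by
  simp [flipOn, hi]

lemma flipOn_filter_ne (x y : Fin n → Bool) : flipOn x (univ.filter fun i => y i ≠ x i) = y := by
  funext i
  simp only [flipOn, mem_filter, mem_univ, true_and]
  cases x i <;> cases y i <;> rfl

lemma flipOn_flipOn_singleton (x : Fin n → Bool) {B : Finset (Fin n)} {j : Fin n} (hj : j ∈ B) :
    flipOn (flipOn x B) {j} = flipOn x (B.erase j) := by
  funext i
  by_cases h : i = j
  · subst h
    simp [flipOn, hj]
  · simp [flipOn, h]

lemma nonempty_of_flipOn_ne {f : (Fin n → Bool) → Bool} {x : Fin n → Bool} {B : Finset (Fin n)}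
    (hB : f (flipOn x B) ≠ f x) : B.Nonempty := by
  rw [nonempty_iff_ne_empty]
  rintro rfl
  exact hB (by rw [flipOn_empty])

end flipOn

section BlockSensitivity

variable (f : (Fin n → Bool) → Bool) (x : Fin n → Bool)

def IsSensitiveBlockFamily {k : ℕ} (B : Fin k → Finset (Fin n)) : Prop :=
  (∀ i, (B i).Nonempty) ∧ (∀ i j, i ≠ j → Disjoint (B i) (B j)) ∧
    ∀ i, f (flipOn x (B i)) ≠ f x

variable {f x}

lemma IsSensitiveBlockFamily.mono {k : ℕ} {B B' : Fin k → Finset (Fin n)}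
    (hB : IsSensitiveBlockFamily f x B) (hsub : ∀ i, B' i ⊆ B i)
    (hsens : ∀ i, f (flipOn x (B' i)) ≠ f x) : IsSensitiveBlockFamily f x B' :=
  ⟨fun i => nonempty_of_flipOn_ne (hsens i),
    fun i j hij => (hB.2.1 i j hij).mono (hsub i) (hsub j), hsens⟩

lemma IsSensitiveBlockFamily.snoc {k : ℕ} {B : Fin k → Finset (Fin n)}
    (hB : IsSensitiveBlockFamily f x B) {D : Finset (Fin n)} (hD : ∀ i, Disjoint (B i) D)
    (hsens : f (flipOn x D) ≠ f x) :
    IsSensitiveBlockFamily f x (Fin.snoc (α := fun _ => Finset (Fin n)) B D) := by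
  obtain ⟨hne, hdisj, hsensB⟩ := hB
  refine ⟨Fin.lastCases (by simpa using nonempty_of_flipOn_ne hsens) (by simpa using hne),
    fun i j hij => ?_, Fin.lastCases (by simpa using hsens) (by simpa using hsensB)⟩
  induction i using Fin.lastCases <;> induction j using Fin.lastCases
  · exact absurd rfl hij
  · simpa using (hD _).symm
  · simpa using hD _
  · simpa using hdisj _ _ (fun h => hij (by rw [h]))

lemma bddAbove_setOf_isSensitiveBlockFamily :
    BddAbove {k | ∃ B : Fin k → Finset (Fin n), IsSensitiveBlockFamily f x B} :=
  ⟨n, fun _ ⟨_, hB⟩ => by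
    simpa using card_le_card_of_forall_inter_nonempty hB.2.1 (S := univ) (by simpa using hB.1)⟩

lemma IsSensitiveBlockFamily.le_bsAt {k : ℕ} {B : Fin k → Finset (Fin n)}
    (hB : IsSensitiveBlockFamily f x B) : k ≤ bsAt f x := by
  unfold bsAt
  exact le_csSup bddAbove_setOf_isSensitiveBlockFamily ⟨B, hB⟩

lemma exists_isSensitiveBlockFamily_bsAt :
    ∃ B : Fin (bsAt f x) → Finset (Fin n), IsSensitiveBlockFamily f x B := by
  unfold bsAt
  refine Nat.sSup_mem ?_ bddAbove_setOf_isSensitiveBlockFamily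
  exact ⟨0, Fin.elim0, fun i => i.elim0, fun i => i.elim0, fun i => i.elim0⟩

lemma bsAt_le_blockSensitivity : bsAt f x ≤ blockSensitivity f :=
  le_ciSup (Set.finite_range _).bddAbove x

/-- At `x^B`, flipping any single bit `j` of a minimal sensitive block `B` yields
`x^(B \ {j})`, which has the value `f x ≠ f (x^B)`. -/
lemma card_le_blockSensitivity_of_minimal {B : Finset (Fin n)}
    (hB : Minimal (fun C => f (flipOn x C) ≠ f x) B) : B.card ≤ blockSensitivity f := by
  set e := B.orderIsoOfFin rfl
  have hsingletons : IsSensitiveBlockFamily f (flipOn x B) fun i => {(e i : Fin n)} := by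
    refine ⟨fun _ => singleton_nonempty _, fun i j hij => ?_, fun i => ?_⟩
    · simpa using fun h => hij (e.injective (Subtype.ext h))
    · have herase := not_not.mp (hB.not_prop_of_lt (erase_ssubset (e i).2))
      rw [flipOn_flipOn_singleton x (e i).2, herase]
      exact hB.prop.symm
  exact hsingletons.le_bsAt.trans bsAt_le_blockSensitivity

end BlockSensitivity

section Certificate

variable (f : (Fin n → Bool) → Bool) (x : Fin n → Bool)

def IsCertificate (S : Finset (Fin n)) : Prop :=
  ∀ y, (∀ i ∈ S, y i = x i) → f y = f x

variable {f x}

lemma certAt_le_card {S : Finset (Fin n)} (hS : IsCertificate f x S) : certAt f x ≤ S.card := by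
  unfold certAt
  exact Nat.sInf_le ⟨S, rfl, hS⟩

lemma exists_isCertificate_card_eq_certAt :
    ∃ S : Finset (Fin n), IsCertificate f x S ∧ S.card = certAt f x := by
  have huniv : IsCertificate f x univ := fun y hy => by
    rw [funext fun i => hy i (mem_univ i)]
  unfold certAt
  obtain ⟨S, hcard, hS⟩ :=
    Nat.sInf_mem (s := {s | ∃ S : Finset (Fin n), S.card = s ∧ IsCertificate f x S})
      ⟨_, univ, rfl, huniv⟩
  exact ⟨S, hS, hcard⟩

lemma IsCertificate.inter_nonempty {S B : Finset (Fin n)} (hS : IsCertificate f x S)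
    (hB : f (flipOn x B) ≠ f x) : (B ∩ S).Nonempty := by
  by_contra h
  exact hB (hS _ fun i hi => flipOn_apply_of_notMem x fun hiB => h ⟨i, mem_inter.mpr ⟨hiB, hi⟩⟩)

lemma bsAt_le_certAt : bsAt f x ≤ certAt f x := by
  obtain ⟨B, hB⟩ := exists_isSensitiveBlockFamily_bsAt (f := f) (x := x)
  obtain ⟨S, hS, hcard⟩ := exists_isCertificate_card_eq_certAt (f := f) (x := x)
  simpa [hcard] using
    card_le_card_of_forall_inter_nonempty hB.2.1 fun i => hS.inter_nonempty (hB.2.2 i)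

lemma isCertificate_biUnion {B : Fin (bsAt f x) → Finset (Fin n)}
    (hB : IsSensitiveBlockFamily f x B) : IsCertificate f x (univ.biUnion B) := by
  intro y hy
  by_contra hfy
  have hD : ∀ i, Disjoint (B i) (univ.filter fun j => y j ≠ x j) := fun i =>
    disjoint_right.mpr fun j hj hjB =>
      (mem_filter.mp hj).2 (hy j (mem_biUnion.mpr ⟨i, mem_univ i, hjB⟩))
  have := (hB.snoc hD (by rwa [flipOn_filter_ne])).le_bsAt
  omega

lemma certAt_le_bsAt_mul_blockSensitivity : certAt f x ≤ bsAt f x * blockSensitivity f := by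
  obtain ⟨B, hB⟩ := exists_isSensitiveBlockFamily_bsAt (f := f) (x := x)
  choose B' hB'B hB' using fun i =>
    exists_minimal_le_of_wellFoundedLT (fun C => f (flipOn x C) ≠ f x) (B i) (hB.2.2 i)
  calc certAt f x ≤ (univ.biUnion B').card :=
        certAt_le_card (isCertificate_biUnion (hB.mono hB'B fun i => (hB' i).prop))
    _ ≤ ∑ i, (B' i).card := card_biUnion_le
    _ ≤ ∑ _i : Fin (bsAt f x), blockSensitivity f :=
        sum_le_sum fun i _ => card_le_blockSensitivity_of_minimal (hB' i)
    _ = bsAt f x * blockSensitivity f := by simp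

end Certificate

/-- Nisan's inequality: `bs(f) ≤ C(f) ≤ bs(f)²`. -/
theorem stmt_7 {n : ℕ} (f : (Fin n → Bool) → Bool) :
    blockSensitivity f ≤ certComplexity f ∧ certComplexity f ≤ (blockSensitivity f) ^ 2 := by
  refine ⟨ciSup_mono (Set.finite_range _).bddAbove fun x => bsAt_le_certAt, ciSup_le fun x => ?_⟩
  calc certAt f x ≤ bsAt f x * blockSensitivity f := certAt_le_bsAt_mul_blockSensitivity
    _ ≤ blockSensitivity f ^ 2 := by rw [sq]; exact Nat.mul_le_mul_right _ bsAt_le_blockSensitivity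
end

section
/- Let f : {0,1}^n → {0,1} be a total Boolean function, c > 1, and suppose p ≤ bs(f)^{1/c}. Assume the relations D^{p∥}(f) ≤ ⌈C^{(1)}(f)/p⌉·bs(f), C^{(1)}(f) ≤ bs(f)², and Q^{p∥}(f) ≥ α·√(bs(f)/p) for a universal constant α > 0. Then D^{p∥}(f) = O(Q^{p∥}(f)^{6+4/(c−1)}). -/
/-!
Write `x = b / p`. Since `⌈C₁/p⌉ ≤ C₁/p + 1` and `C₁ ≤ b²`, the first relation gives
`D ≤ 2 b³ / p = 2 x³ p²`. The hypothesis `p ≤ b^{1/c}` is equivalent to `p ≤ x^{1/(c-1)}`,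
so `D ≤ 2 x^{3 + 2/(c-1)}`, while the quantum lower bound says `x ≤ (Q/α)²`.
-/

open Real

lemma le_rpow_div_of_le_rpow_one_div {x y c : ℝ} (hx : 0 < x) (hy : 0 ≤ y) (hc : 1 < c)
    (h : x ≤ y ^ (1 / c)) : x ≤ (y / x) ^ (1 / (c - 1)) := by
  rw [one_div, le_rpow_inv_iff_of_pos hx.le hy (by linarith)] at h
  rwa [one_div, le_rpow_inv_iff_of_pos hx.le (by positivity) (by linarith), le_div_iff₀ hx,
    rpow_sub_one hx.ne', div_mul_cancel₀ _ hx.ne']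

lemma le_of_le_rpow_one_div {x y c : ℝ} (hx : 1 ≤ x) (hy : 0 ≤ y) (hc : 1 ≤ c)
    (h : x ≤ y ^ (1 / c)) : x ≤ y := by
  rw [one_div, le_rpow_inv_iff_of_pos (by linarith) hy (by linarith)] at h
  exact (self_le_rpow_of_one_le hx hc).trans h

lemma pow_mul_pow_le_rpow_add {x y r : ℝ} (hx : 0 < x) (hy : 0 ≤ y) (h : y ≤ x ^ r)
    (n m : ℕ) : x ^ n * y ^ m ≤ x ^ ((n : ℝ) + m * r) :=
  calc x ^ n * y ^ m ≤ x ^ n * (x ^ r) ^ m := by gcongr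
    _ = x ^ ((n : ℝ) + m * r) := by
      rw [rpow_add hx, rpow_natCast, ← rpow_mul_natCast hx.le, mul_comm r]

lemma cast_ceilDiv_le_div_add_one (a : ℕ) {p : ℕ} (hp : 0 < p) :
    (((a + p - 1) / p : ℕ) : ℝ) ≤ a / p + 1 := by
  have hp' : (0 : ℝ) < p := by exact_mod_cast hp
  calc (((a + p - 1) / p : ℕ) : ℝ) ≤ ((a + p - 1 : ℕ) : ℝ) / p := Nat.cast_div_le
    _ ≤ (a + p : ℝ) / p := by gcongr; exact_mod_cast Nat.sub_le _ _
    _ = a / p + 1 := by field_simp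

lemma cast_le_two_mul_div_pow_three_mul_sq {b C₁ p D : ℕ} (hp : 0 < p) (hpb : p ≤ b)
    (hD : D ≤ (C₁ + p - 1) / p * b) (hC₁ : C₁ ≤ b ^ 2) :
    (D : ℝ) ≤ 2 * ((b : ℝ) / p) ^ 3 * (p : ℝ) ^ 2 := by
  have hp' : (0 : ℝ) < p := by exact_mod_cast hp
  have hbb : (p : ℝ) ≤ b ^ 2 := by exact_mod_cast hpb.trans (Nat.le_self_pow two_ne_zero b)
  calc (D : ℝ) ≤ (((C₁ + p - 1) / p : ℕ) : ℝ) * b := by exact_mod_cast hD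
    _ ≤ (C₁ / p + 1) * b := by gcongr; exact cast_ceilDiv_le_div_add_one C₁ hp
    _ ≤ (b ^ 2 / p + b ^ 2 / p) * b := by
      gcongr
      · exact_mod_cast hC₁
      · rwa [le_div_iff₀ hp', one_mul]
    _ = 2 * ((b : ℝ) / p) ^ 3 * (p : ℝ) ^ 2 := by field_simp; ring

/-- Given the stated relations between the complexity measures, the deterministic
`p`-parallel complexity is `O(Q^{6+4/(c-1)})`: there is a constant `K` (depending only
on `c` and `α`) bounding `D ≤ K · Q^{6+4/(c-1)}` for all functions/parameters. -/
theorem stmt_9 (c α : ℝ) (hc : 1 < c) (hα : 0 < α) :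
    ∃ K : ℝ, 0 < K ∧
      ∀ (b C1 p D Q : ℕ),
        1 ≤ p →
        (p : ℝ) ≤ (b : ℝ) ^ (1 / c) →
        D ≤ ((C1 + p - 1) / p) * b →
        C1 ≤ b ^ 2 →
        α * Real.sqrt ((b : ℝ) / p) ≤ Q →
        (D : ℝ) ≤ K * (Q : ℝ) ^ (6 + 4 / (c - 1)) := by
  refine ⟨2 / α ^ (6 + 4 / (c - 1)), by positivity, ?_⟩
  intro b C1 p D Q hp hpb hD hC1 hQ
  have hp' : (1 : ℝ) ≤ p := by exact_mod_cast hp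
  have hpb' : p ≤ b := by exact_mod_cast le_of_le_rpow_one_div hp' b.cast_nonneg hc.le hpb
  have hx : (0 : ℝ) < b / p := 
    div_pos (by exact_mod_cast hp.trans hpb') (by positivity)
  have hpx : (p : ℝ) ≤ (b / p) ^ (1 / (c - 1)) :=
    le_rpow_div_of_le_rpow_one_div (by linarith) b.cast_nonneg hc hpb
  have hxQ : (b / p : ℝ) ≤ (Q / α) ^ 2 := by
    rwa [← sqrt_le_left (by positivity), le_div_iff₀ hα, mul_comm]
  calc (D : ℝ) ≤ 2 * ((b : ℝ) / p) ^ 3 * (p : ℝ) ^ 2 :=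
        cast_le_two_mul_div_pow_three_mul_sq hp hpb' hD hC1
    _ ≤ 2 * ((b : ℝ) / p) ^ (3 + 2 / (c - 1)) := by
        rw [mul_assoc]
        gcongr
        refine (pow_mul_pow_le_rpow_add hx (by positivity) hpx 3 2).trans_eq ?_
        congr 1; push_cast; ring
    _ ≤ 2 * ((Q / α) ^ 2) ^ (3 + 2 / (c - 1)) := by gcongr
    _ = 2 / α ^ (6 + 4 / (c - 1)) * Q ^ (6 + 4 / (c - 1)) := by
        rw [← rpow_natCast, ← rpow_mul (by positivity), div_rpow (by positivity) hα.le]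
        have he : (2 : ℝ) * (3 + 2 / (c - 1)) = 6 + 4 / (c - 1) := by ring
        rw [Nat.cast_ofNat, he]; ring
end

section
/- Define α_j = (1/(2n))·max((n/p)^{2/3} − j/p, 0) for integers j ≥ 0, with n, p positive integers, p ≤ n. Then for every s ≥ 0 and every J with 1 ≤ |J| ≤ p: (s·p + binom(p,2))·α_s² + n²·(α_s − α_{s+|J|})² ≤ 1. -/
/-- The dual learning-graph solution for element distinctness:
`α_j = (1/(2n)) · max((n/p)^{2/3} − j/p, 0)`. -/
noncomputable def alphaED (n p : ℕ) (j : ℕ) : ℝ :=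
  (1 / (2 * (n : ℝ))) * max (((n : ℝ) / p) ^ ((2 : ℝ) / 3) - (j : ℝ) / p) 0

/-!
Write `M = (n/p)^{2/3}`, so that `α_j = max(M - j/p, 0) / (2n)` and `p² M³ = n²`.
Each of the three summands is at most `1/4`:
* `α_s` vanishes unless `s < pM`, and `α_s ≤ α_0 = M/(2n)`, so `s p α_s² ≤ p² M α_0² = 1/4`;
* `binom(p,2) ≤ p² ≤ p² M` because `M ≥ 1` when `p ≤ n`, so the same bound applies;
* `j ↦ α_j` is `1/(2np)`-Lipschitz, so `n² (α_s − α_{s+t})² ≤ (t/p)²/4 ≤ 1/4`.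
-/

lemma rpow_two_div_three_pow_three {x : ℝ} (hx : 0 ≤ x) :
    (x ^ ((2 : ℝ) / 3)) ^ 3 = x ^ 2 := by
  rw [← Real.rpow_natCast _ 3, ← Real.rpow_mul hx, ← Real.rpow_natCast x 2]
  norm_num

section

variable {n p : ℕ}

lemma alphaED_nonneg (j : ℕ) : 0 ≤ alphaED n p j := by
  unfold alphaED
  positivity

lemma alphaED_zero : alphaED n p 0 = ((n : ℝ) / p) ^ ((2 : ℝ) / 3) / (2 * n) := by
  rw [alphaED, Nat.cast_zero, zero_div, sub_zero, max_eq_left (by positivity)]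
  ring

lemma alphaED_le_alphaED_zero (j : ℕ) : alphaED n p j ≤ alphaED n p 0 := by
  unfold alphaED
  gcongr
  simp

lemma alphaED_eq_zero_of_le {j : ℕ} (hj : (p : ℝ) * ((n : ℝ) / p) ^ ((2 : ℝ) / 3) ≤ j) :
    alphaED n p j = 0 := by
  rcases p.eq_zero_or_pos with rfl | hp
  · simp [alphaED]
  · rw [alphaED, max_eq_right, mul_zero]
    rw [sub_nonpos, le_div_iff₀ (by exact_mod_cast hp)]
    linarith

lemma abs_alphaED_sub_alphaED_le (s t : ℕ) :
    |alphaED n p s - alphaED n p (s + t)| ≤ t / (2 * n * p) := by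
  set M := ((n : ℝ) / p) ^ ((2 : ℝ) / 3)
  have hlip : |max (M - s / p) 0 - max (M - (s + t : ℕ) / p) 0| ≤ t / p := by
    refine (abs_max_sub_max_le_abs _ _ 0).trans_eq ?_
    rw [sub_sub_sub_cancel_left, Nat.cast_add, add_div, add_sub_cancel_left,
      abs_of_nonneg (by positivity)]
  rw [alphaED, alphaED, ← mul_sub, abs_mul, abs_of_nonneg (by positivity)]
  calc 1 / (2 * (n : ℝ)) * _ ≤ 1 / (2 * n) * (t / p) := by gcongr
    _ = t / (2 * n * p) := by field_simp

lemma sq_mul_rpow_mul_alphaED_zero_sq (hn : 0 < n) (hp : 0 < p) :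
    (p : ℝ) ^ 2 * ((n : ℝ) / p) ^ ((2 : ℝ) / 3) * alphaED n p 0 ^ 2 = 1 / 4 := by
  have hM3 := rpow_two_div_three_pow_three (x := (n : ℝ) / p) (by positivity)
  rw [alphaED_zero]
  have hn' : (n : ℝ) ≠ 0 := by positivity
  have hp' : (p : ℝ) ≠ 0 := by positivity
  calc (p : ℝ) ^ 2 * ((n : ℝ) / p) ^ ((2 : ℝ) / 3) * (((n : ℝ) / p) ^ ((2 : ℝ) / 3) / (2 * n)) ^ 2
      = (p : ℝ) ^ 2 * (((n : ℝ) / p) ^ ((2 : ℝ) / 3)) ^ 3 / (4 * n ^ 2) := by ring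
    _ = 1 / 4 := by rw [hM3]; field_simp

lemma mul_alphaED_sq_le (hn : 0 < n) (hp : 0 < p) {K : ℝ}
    (hK : K ≤ (p : ℝ) ^ 2 * ((n : ℝ) / p) ^ ((2 : ℝ) / 3)) (j : ℕ) :
    K * alphaED n p j ^ 2 ≤ 1 / 4 := by
  rw [← sq_mul_rpow_mul_alphaED_zero_sq hn hp]
  gcongr
  · exact alphaED_nonneg j
  · exact alphaED_le_alphaED_zero j

lemma natCast_mul_mul_alphaED_sq_le (hn : 0 < n) (hp : 0 < p) (s : ℕ) :
    (s : ℝ) * p * alphaED n p s ^ 2 ≤ 1 / 4 := by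
  by_cases hs : (p : ℝ) * ((n : ℝ) / p) ^ ((2 : ℝ) / 3) ≤ s
  · simp [alphaED_eq_zero_of_le hs]
  · refine mul_alphaED_sq_le hn hp ?_ s
    nlinarith [(Nat.cast_pos.mpr hp : (0 : ℝ) < p)]

lemma choose_two_mul_alphaED_sq_le (hp : 0 < p) (hpn : p ≤ n) (j : ℕ) :
    (p.choose 2 : ℝ) * alphaED n p j ^ 2 ≤ 1 / 4 := by
  have hM : 1 ≤ ((n : ℝ) / p) ^ ((2 : ℝ) / 3) :=
    Real.one_le_rpow ((one_le_div (by positivity)).mpr (by exact_mod_cast hpn)) (by norm_num)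
  refine mul_alphaED_sq_le (hp.trans_le hpn) hp ?_ j
  calc (p.choose 2 : ℝ) ≤ (p : ℝ) ^ 2 := by exact_mod_cast Nat.choose_le_pow p 2
    _ ≤ (p : ℝ) ^ 2 * ((n : ℝ) / p) ^ ((2 : ℝ) / 3) := le_mul_of_one_le_right (by positivity) hM

lemma sq_mul_alphaED_sub_alphaED_sq_le (hn : 0 < n) {t : ℕ} (htp : t ≤ p) (s : ℕ) :
    (n : ℝ) ^ 2 * (alphaED n p s - alphaED n p (s + t)) ^ 2 ≤ 1 / 4 := by
  have htp' : (t : ℝ) / p ≤ 1 := div_le_one_of_le₀ (by exact_mod_cast htp) (by positivity)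
  have hn' : (n : ℝ) ≠ 0 := by positivity
  calc (n : ℝ) ^ 2 * (alphaED n p s - alphaED n p (s + t)) ^ 2
      ≤ (n : ℝ) ^ 2 * (t / (2 * n * p)) ^ 2 := by
        rw [← sq_abs (alphaED n p s - _)]
        gcongr
        exact abs_alphaED_sub_alphaED_le s t
    _ = ((t : ℝ) / p) ^ 2 / 4 := by field_simp; ring
    _ ≤ 1 / 4 := by gcongr; exact pow_le_one₀ (by positivity) htp'

end

theorem stmt_14_general (n p : ℕ) (hn : 1 ≤ n) (hp : 1 ≤ p) (hpn : p ≤ n)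
    (s t : ℕ) (htp : t ≤ p) :
    ((s : ℝ) * p + (p.choose 2 : ℝ)) * (alphaED n p s) ^ 2 +
      (n : ℝ) ^ 2 * (alphaED n p s - alphaED n p (s + t)) ^ 2 ≤ 1 := by
  have hs := natCast_mul_mul_alphaED_sq_le hn hp s
  have hchoose := choose_two_mul_alphaED_sq_le hp hpn s
  have hdiff := sq_mul_alphaED_sub_alphaED_sq_le hn htp s
  linarith

/-- Feasibility of the dual solution for the `Ω((n/p)^{2/3})` parallel lower bound for
element distinctness; `t = |J|`. -/
theorem stmt_14 (n p : ℕ) (hn : 1 ≤ n) (hp : 1 ≤ p) (hpn : p ≤ n)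
    (s t : ℕ) (ht1 : 1 ≤ t) (htp : t ≤ p) :
    ((s : ℝ) * p + (p.choose 2 : ℝ)) * (alphaED n p s) ^ 2 +
      (n : ℝ) ^ 2 * (alphaED n p s - alphaED n p (s + t)) ^ 2 ≤ 1 :=
  stmt_14_general n p hn hp hpn s t htp
end
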